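/- Let G ⊙_k H denote the rooted grafting of rooted graphs G and H: their roots are joined by a path of length k. For stars T_{m} and T_{n} rooted at their centers, and a = 1 if m is odd, 2 if m is even, b = 1 if n is odd, 2 if n is even, one has 𝒢(T_{m} ⊙_k T_{n}) = 𝒢(T_{a} ⊙_k T_{b}) for all positive integers m, n, k. -/

import Mathlib

/-- The minimum excluded value of a finite set of naturals. -/
noncomputable def mex (s : Finset ℕ) : ℕ := sInf {n : ℕ | n ∉ s}

/-- Node-Kayles Grundy value of the position given by the induced subgraph of `G`
on the finite vertex set `s`: a move picks a vertex `v ∈ s` and removes its closed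
neighborhood, and the Grundy value is the mex of the Grundy values of the options.
(For a disconnected position this agrees with the nim-sum of the components'
Grundy values, by the Sprague–Grundy theory.) -/
noncomputable def nkGrundy {V : Type*} [DecidableEq V] (G : SimpleGraph V) [DecidableRel G.Adj]
    (s : Finset V) : ℕ :=
  mex (s.attach.image fun v =>
    nkGrundy G ((s.erase v.1).filter fun w => ¬ G.Adj v.1 w))
termination_by s.card
decreasing_by
  exact lt_of_le_of_lt (Finset.card_filter_le _ _) (Finset.card_erase_lt_of_mem v.2)

instance {V : Type*} (r : V → V → Prop) [DecidableEq V] [DecidableRel r] :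
    DecidableRel (SimpleGraph.fromRel r).Adj :=
  fun a b => decidable_of_iff _ (SimpleGraph.fromRel_adj r a b).symm

/-- The rooted grafting `T_{m} ⊙_k T_{n}` of two stars: the centers of a star
with `m` leaves and a star with `n` leaves are joined by a path of length `k`
(i.e. with `k` edges and `k - 1` internal vertices).  Encoding on ℕ: first
center `0`, its leaves `1, …, m`, internal path vertices `m+1, …, m+k-1`,
second center `m+k`, its leaves `m+k+1, …, m+k+n`.  The vertex set is
`{0, …, m+k+n}`. -/
def doubleStar (m n k : ℕ) : SimpleGraph ℕ :=
  SimpleGraph.fromRel (fun a b =>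
    (a = 0 ∧ 1 ≤ b ∧ b ≤ m) ∨
    (a = 0 ∧ b = m + 1) ∨
    (m + 1 ≤ a ∧ a < m + k ∧ b = a + 1) ∨
    (a = m + k ∧ m + k + 1 ≤ b ∧ b ≤ m + k + n))

instance (m n k : ℕ) : DecidableRel (doubleStar m n k).Adj :=
  fun a b => decidable_of_iff _ (SimpleGraph.fromRel_adj _ a b).symm

/-!
Adding two leaves `u`, `v` at a vertex `c` that already carries a leaf `l` does not change the
Node-Kayles Grundy value. An isolated vertex flips the last bit of the Grundy value, so playing
`u` (which leaves `v` and, once `c` is gone, `l` isolated) is worth as much as playing `l`; every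
other move keeps the configuration or makes `u`, `v` two cancelling isolated vertices. Removing two
leaves from either star of `T_m ⊙_k T_n` therefore preserves `𝒢`, and `m`, `n` drop to `1` or `2`.
-/

open Finset

lemma mex_notMem (s : Finset ℕ) : mex s ∉ s :=
  Nat.sInf_mem (s := {n | n ∉ s}) (Infinite.exists_notMem_finset s)

lemma mem_of_lt_mex {s : Finset ℕ} {k : ℕ} (h : k < mex s) : k ∈ s := by
  by_contra hk
  exact (Nat.sInf_le hk).not_gt h

lemma mex_eq_of_notMem_of_forall_lt_mem {s : Finset ℕ} {n : ℕ} (hn : n ∉ s)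
    (h : ∀ k < n, k ∈ s) : mex s = n :=
  (Nat.sInf_le hn).antisymm (not_lt.1 fun hlt => mex_notMem s (h _ hlt))

lemma Nat.xor_one_ne_self (n : ℕ) : n ^^^ 1 ≠ n := by
  rcases Nat.even_or_odd n with h | h
  · rw [Nat.xor_one_of_even h]; omega
  · rw [Nat.xor_one_of_odd h]; have := h.pos; omega

lemma Nat.xor_one_lt_of_lt_xor_one {x g : ℕ} (hx : x < g ^^^ 1) (hxg : x ≠ g) : x ^^^ 1 < g := by
  rcases Nat.even_or_odd x with hx' | hx' <;> rcases Nat.even_or_odd g with hg | hg <;>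
    simp only [Nat.xor_one_of_even, Nat.xor_one_of_odd, *] at hx ⊢ <;>
    rcases hx' with ⟨a, rfl⟩ <;> rcases hg with ⟨b, rfl⟩ <;> omega

lemma mex_insert_mex_image_xor_one (S : Finset ℕ) :
    mex (insert (mex S) (S.image (· ^^^ 1))) = mex S ^^^ 1 := by
  refine mex_eq_of_notMem_of_forall_lt_mem ?_ fun k hk => ?_
  · simp only [mem_insert, mem_image, Nat.xor_one_ne_self, false_or, not_exists, not_and]
    intro a ha hag
    rw [Nat.xor_left_inj.1 hag] at ha
    exact mex_notMem S ha
  · by_cases hkg : k = mex S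
    · exact hkg ▸ mem_insert_self _ _
    · exact mem_insert_of_mem (mem_image.2 ⟨k ^^^ 1,
        mem_of_lt_mex (Nat.xor_one_lt_of_lt_xor_one hk hkg), Nat.xor_xor_cancel_right _ _⟩)

section NodeKayles

variable {V : Type*} [DecidableEq V] (G : SimpleGraph V) [DecidableRel G.Adj]

def nkMove (s : Finset V) (v : V) : Finset V :=
  (s.erase v).filter fun w => ¬ G.Adj v w

variable {G} {s : Finset V} {u v w : V}

@[simp]
lemma mem_nkMove : w ∈ nkMove G s v ↔ w ∈ s ∧ w ≠ v ∧ ¬ G.Adj v w := by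
  simp only [nkMove, mem_filter, mem_erase]
  tauto

lemma nkMove_subset : nkMove G s v ⊆ s := fun _ hw => (mem_nkMove.1 hw).1

lemma card_nkMove_lt (hv : v ∈ s) : #(nkMove G s v) < #s :=
  (card_filter_le _ _).trans_lt (card_erase_lt_of_mem hv)

lemma nkMove_insert_of_not_adj (hvu : v ≠ u) (hadj : ¬ G.Adj v u) :
    nkMove G (insert u s) v = insert u (nkMove G s v) := by
  ext w
  by_cases hw : w = u <;> simp [hw, hvu.symm, hadj]

lemma nkMove_insert_of_adj (hadj : G.Adj v u) : nkMove G (insert u s) v = nkMove G s v := by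
  ext w
  by_cases hw : w = u <;> simp [hw, hadj]

lemma nkMove_insert_self (hu : u ∉ s) (hiso : ∀ w ∈ s, ¬ G.Adj u w) :
    nkMove G (insert u s) u = s := by
  ext w
  by_cases hw : w = u
  · simp [hw, hu]
  · simp +contextual [hw, hiso]

variable (G) in
lemma nkGrundy_eq_mex (s : Finset V) :
    nkGrundy G s = mex (s.image fun v => nkGrundy G (nkMove G s v)) := by
  rw [nkGrundy]
  congr 1
  ext x
  simp only [nkMove, mem_image, mem_attach, true_and, Subtype.exists, exists_prop]

theorem nkGrundy_insert_of_isolated {s : Finset V} {u : V} (hu : u ∉ s)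
    (hiso : ∀ w ∈ s, ¬ G.Adj u w) :
    nkGrundy G (insert u s) = nkGrundy G s ^^^ 1 := by
  have hmove : ∀ v ∈ s,
      nkGrundy G (nkMove G (insert u s) v) = nkGrundy G (nkMove G s v) ^^^ 1 := by
    intro v hv
    rw [nkMove_insert_of_not_adj (ne_of_mem_of_not_mem hv hu) fun h => hiso v hv h.symm]
    exact nkGrundy_insert_of_isolated (fun h => hu (nkMove_subset h))
      fun w hw => hiso w (nkMove_subset hw)
  calc nkGrundy G (insert u s)
      = mex (insert (nkGrundy G s)
          ((s.image fun v => nkGrundy G (nkMove G s v)).image (· ^^^ 1))) := by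
        rw [nkGrundy_eq_mex G (insert u s), image_insert, nkMove_insert_self hu hiso, image_image]
        exact congrArg _ (congrArg _ (image_congr hmove))
    _ = nkGrundy G s ^^^ 1 := by rw [nkGrundy_eq_mex G s, mex_insert_mex_image_xor_one]
termination_by #s
decreasing_by exact card_nkMove_lt ‹_›

lemma nkGrundy_insert_insert_of_isolated (hu : u ∉ s) (hv : v ∉ s) (huv : u ≠ v)
    (h_uv : ¬ G.Adj u v) (hu_iso : ∀ w ∈ s, ¬ G.Adj u w) (hv_iso : ∀ w ∈ s, ¬ G.Adj v w) :
    nkGrundy G (insert u (insert v s)) = nkGrundy G s := by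
  have hu_iso' : ∀ w ∈ insert v s, ¬ G.Adj u w := by
    simpa only [forall_mem_insert] using ⟨h_uv, hu_iso⟩
  rw [nkGrundy_insert_of_isolated (by simp [hu, huv]) hu_iso',
    nkGrundy_insert_of_isolated hv hv_iso, Nat.xor_xor_cancel_right]

lemma nkMove_image {W : Type*} [DecidableEq W] {H : SimpleGraph W} [DecidableRel H.Adj]
    {f : V → W} (hf : Set.InjOn f s) (hadj : ∀ a ∈ s, ∀ b ∈ s, G.Adj a b ↔ H.Adj (f a) (f b))
    (hv : v ∈ s) : nkMove H (s.image f) (f v) = (nkMove G s v).image f := by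
  ext y
  simp only [mem_nkMove, mem_image]
  constructor
  · rintro ⟨⟨a, ha, rfl⟩, hav, hnadj⟩
    exact ⟨a, ⟨ha, fun h => hav (h ▸ rfl), fun h => hnadj ((hadj v hv a ha).1 h)⟩, rfl⟩
  · rintro ⟨a, ⟨ha, hav, hnadj⟩, rfl⟩
    exact ⟨⟨a, ha, rfl⟩, fun h => hav (hf ha hv h), fun h => hnadj ((hadj v hv a ha).2 h)⟩

theorem nkGrundy_image {W : Type*} [DecidableEq W] {H : SimpleGraph W} [DecidableRel H.Adj]
    {s : Finset V} {f : V → W} (hf : Set.InjOn f s)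
    (hadj : ∀ a ∈ s, ∀ b ∈ s, G.Adj a b ↔ H.Adj (f a) (f b)) :
    nkGrundy H (s.image f) = nkGrundy G s := by
  rw [nkGrundy_eq_mex H, nkGrundy_eq_mex G, image_image]
  refine congrArg mex (image_congr fun v hv => ?_)
  rw [Function.comp_apply, nkMove_image hf hadj hv]
  exact nkGrundy_image (hf.mono (coe_subset.2 nkMove_subset))
    fun a ha b hb => hadj a (nkMove_subset ha) b (nkMove_subset hb)
termination_by #s
decreasing_by exact card_nkMove_lt ‹_›

theorem nkGrundy_congr_of_adj_iff {H : SimpleGraph V} [DecidableRel H.Adj]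
    (h : ∀ a ∈ s, ∀ b ∈ s, G.Adj a b ↔ H.Adj a b) : nkGrundy H s = nkGrundy G s := by
  simpa using nkGrundy_image (f := id) (Set.injOn_id _) h

variable {c l : V}

lemma nkMove_insert_insert_of_leaf (hu : u ∉ s) (huv : u ≠ v) (h_uv : ¬ G.Adj u v)
    (hu_leaf : ∀ w ∈ s, G.Adj u w ↔ w = c) :
    nkMove G (insert u (insert v s)) u = insert v (s.erase c) := by
  ext w
  simp only [mem_nkMove, mem_insert, mem_erase]
  constructor
  · rintro ⟨rfl | rfl | hw, hwu, hadj⟩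
    · exact absurd rfl hwu
    · exact Or.inl rfl
    · exact Or.inr ⟨fun h => hadj ((hu_leaf w hw).2 h), hw⟩
  · rintro (rfl | ⟨hwc, hw⟩)
    · exact ⟨Or.inr (Or.inl rfl), huv.symm, h_uv⟩
    · exact ⟨Or.inr (Or.inr hw), ne_of_mem_of_not_mem hw hu, fun h => hwc ((hu_leaf w hw).1 h)⟩

/-- After a new leaf at `c` is played, the other new leaf `v` and the old leaf `l` are isolated,
so they cancel and the position is worth as much as playing `l`. -/
lemma nkGrundy_insert_erase_of_leaf (hl : l ∈ s) (hl_leaf : ∀ w ∈ s, G.Adj l w ↔ w = c)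
    (hv : v ∉ s) (hv_leaf : ∀ w ∈ s, G.Adj v w ↔ w = c) :
    nkGrundy G (insert v (s.erase c)) = nkGrundy G (nkMove G s l) := by
  have hsc : s.erase c = insert l (nkMove G s l) := by
    ext w
    simp only [mem_erase, mem_insert, mem_nkMove]
    constructor
    · rintro ⟨hwc, hw⟩
      by_cases hwl : w = l
      · exact Or.inl hwl
      · exact Or.inr ⟨hw, hwl, fun h => hwc ((hl_leaf w hw).1 h)⟩
    · rintro (rfl | ⟨hw, -, hlw⟩)
      · exact ⟨fun h => G.irrefl ((hl_leaf w hl).2 h), hl⟩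
      · exact ⟨fun h => hlw ((hl_leaf w hw).2 h), hw⟩
  rw [nkGrundy_insert_of_isolated (fun h => hv (mem_of_mem_erase h))
      fun w hw h => ne_of_mem_erase hw ((hv_leaf w (mem_of_mem_erase hw)).1 h),
    hsc, nkGrundy_insert_of_isolated (by simp) fun w hw => (mem_nkMove.1 hw).2.2,
    Nat.xor_xor_cancel_right]

theorem nkGrundy_insert_insert_of_leaves {s : Finset V} {c l u v : V} (hc : c ∈ s) (hl : l ∈ s)
    (hu : u ∉ s) (hv : v ∉ s) (huv : u ≠ v) (h_uv : ¬ G.Adj u v)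
    (hl_leaf : ∀ w ∈ s, G.Adj l w ↔ w = c) (hu_leaf : ∀ w ∈ s, G.Adj u w ↔ w = c)
    (hv_leaf : ∀ w ∈ s, G.Adj v w ↔ w = c) :
    nkGrundy G (insert u (insert v s)) = nkGrundy G s := by
  have hmove_u : nkGrundy G (nkMove G (insert u (insert v s)) u) = nkGrundy G (nkMove G s l) := by
    rw [nkMove_insert_insert_of_leaf hu huv h_uv hu_leaf,
      nkGrundy_insert_erase_of_leaf hl hl_leaf hv hv_leaf]
  have hmove_v : nkGrundy G (nkMove G (insert u (insert v s)) v) = nkGrundy G (nkMove G s l) := by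
    rw [insert_comm, nkMove_insert_insert_of_leaf hv huv.symm (fun h => h_uv h.symm) hv_leaf,
      nkGrundy_insert_erase_of_leaf hl hl_leaf hu hu_leaf]
  have hmove_s : ∀ w ∈ s,
      nkGrundy G (nkMove G (insert u (insert v s)) w) = nkGrundy G (nkMove G s w) := by
    intro w hw
    by_cases hwc : w = c
    · rw [nkMove_insert_of_adj ((hu_leaf w hw).2 hwc).symm,
        nkMove_insert_of_adj ((hv_leaf w hw).2 hwc).symm]
    rw [nkMove_insert_of_not_adj (ne_of_mem_of_not_mem hw hu)
        fun h => hwc ((hu_leaf w hw).1 h.symm),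
      nkMove_insert_of_not_adj (ne_of_mem_of_not_mem hw hv)
        fun h => hwc ((hv_leaf w hw).1 h.symm)]
    have hut : u ∉ nkMove G s w := fun h => hu (nkMove_subset h)
    have hvt : v ∉ nkMove G s w := fun h => hv (nkMove_subset h)
    by_cases hct : c ∈ nkMove G s w
    · have hlt : l ∈ nkMove G s w := by
        refine mem_nkMove.2 ⟨hl, ?_, fun h => hwc ((hl_leaf w hw).1 h.symm)⟩
        rintro rfl
        exact (mem_nkMove.1 hct).2.2 ((hl_leaf c hc).2 rfl)
      exact nkGrundy_insert_insert_of_leaves hct hlt hut hvt huv h_uv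
        (fun x hx => hl_leaf x (nkMove_subset hx)) (fun x hx => hu_leaf x (nkMove_subset hx))
        (fun x hx => hv_leaf x (nkMove_subset hx))
    · exact nkGrundy_insert_insert_of_isolated hut hvt huv h_uv
        (fun x hx h => hct ((hu_leaf x (nkMove_subset hx)).1 h ▸ hx))
        (fun x hx h => hct ((hv_leaf x (nkMove_subset hx)).1 h ▸ hx))
  have hl_opt : nkGrundy G (nkMove G s l) ∈ s.image fun w => nkGrundy G (nkMove G s w) :=
    mem_image.2 ⟨l, hl, rfl⟩
  rw [nkGrundy_eq_mex G (insert u (insert v s)), nkGrundy_eq_mex G s, image_insert, image_insert,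
    hmove_u, hmove_v, image_congr hmove_s, insert_eq_of_mem hl_opt, insert_eq_of_mem hl_opt]
termination_by #s
decreasing_by exact card_nkMove_lt ‹_›

end NodeKayles

lemma SimpleGraph.fromRel_adj_iff_of_rel_iff {V W : Type*} {r : V → V → Prop} {r' : W → W → Prop}
    {f : V → W} {a b : V} (hf : f a = f b → a = b) (hab : r a b ↔ r' (f a) (f b))
    (hba : r b a ↔ r' (f b) (f a)) :
    (SimpleGraph.fromRel r).Adj a b ↔ (SimpleGraph.fromRel r').Adj (f a) (f b) := by
  simp only [SimpleGraph.fromRel_adj, hab, hba, ne_eq]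
  exact and_congr_left fun _ => not_congr ⟨congrArg f, hf⟩

section DoubleStar

variable {m n k a b : ℕ}

lemma doubleStar_adj :
    (doubleStar m n k).Adj a b ↔
      ((a = 0 ∧ 1 ≤ b ∧ b ≤ m) ∨ (a = 0 ∧ b = m + 1) ∨
        (m + 1 ≤ a ∧ a < m + k ∧ b = a + 1) ∨ (a = m + k ∧ m + k + 1 ≤ b ∧ b ≤ m + k + n)) ∨
      ((b = 0 ∧ 1 ≤ a ∧ a ≤ m) ∨ (b = 0 ∧ a = m + 1) ∨
        (m + 1 ≤ b ∧ b < m + k ∧ a = b + 1) ∨ (b = m + k ∧ m + k + 1 ≤ a ∧ a ≤ m + k + n)) := by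
  rw [doubleStar, SimpleGraph.fromRel_adj, and_iff_right_iff_imp]
  omega

lemma doubleStar_adj_add_two_left {f : ℕ → ℕ}
    (hf : ∀ x, (x ≤ m ∧ f x = x) ∨ (m < x ∧ f x = x + 2)) (hk : 1 ≤ k)
    (ha : a < m + k + n + 1) (hb : b < m + k + n + 1) :
    (doubleStar m n k).Adj a b ↔ (doubleStar (m + 2) n k).Adj (f a) (f b) := by
  refine SimpleGraph.fromRel_adj_iff_of_rel_iff ?_ ?_ ?_ <;>
    rcases hf a with ⟨ha', hfa⟩ | ⟨ha', hfa⟩ <;> rcases hf b with ⟨hb', hfb⟩ | ⟨hb', hfb⟩ <;>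
    rw [hfa, hfb] <;> omega

lemma doubleStar_adj_add_two_right (ha : a < m + k + n + 1) (hb : b < m + k + n + 1) :
    (doubleStar m n k).Adj a b ↔ (doubleStar m (n + 2) k).Adj a b :=
  SimpleGraph.fromRel_adj_iff_of_rel_iff (f := id) id (by simp only [id]; omega)
    (by simp only [id]; omega)

theorem nkGrundy_doubleStar_add_two_left (hm : 1 ≤ m) (hk : 1 ≤ k) :
    nkGrundy (doubleStar (m + 2) n k) (range (m + 2 + k + n + 1)) =
      nkGrundy (doubleStar m n k) (range (m + k + n + 1)) := by
  -- relabelling that makes room for the new leaves `m + 1`, `m + 2` of the first star; only its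
  -- specification is kept, in a form `omega` can use
  obtain ⟨f, hf⟩ : ∃ f : ℕ → ℕ, ∀ x, (x ≤ m ∧ f x = x) ∨ (m < x ∧ f x = x + 2) :=
    ⟨fun x => if x ≤ m then x else x + 2, fun x => by by_cases h : x ≤ m <;> simp [h]; omega⟩
  have hmem : ∀ x, x ∈ (range (m + k + n + 1)).image f ↔
      x < m + 2 + k + n + 1 ∧ x ≠ m + 1 ∧ x ≠ m + 2 := by
    intro x
    simp only [mem_image, mem_range]
    constructor
    · rintro ⟨y, hy, rfl⟩
      have := hf y
      omega
    · intro hx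
      by_cases hlow : x ≤ m
      · exact ⟨x, by omega, by have := hf x; omega⟩
      · exact ⟨x - 2, by omega, by have := hf (x - 2); omega⟩
  have hsplit : range (m + 2 + k + n + 1) =
      insert (m + 1) (insert (m + 2) ((range (m + k + n + 1)).image f)) := by
    ext x
    simp only [mem_insert, hmem, mem_range]
    omega
  have hleaf : ∀ x ∈ ({1, m + 1, m + 2} : Finset ℕ), ∀ w ∈ (range (m + k + n + 1)).image f,
      (doubleStar (m + 2) n k).Adj x w ↔ w = 0 := by
    simp only [mem_insert, mem_singleton, hmem, doubleStar_adj]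
    rintro x (rfl | rfl | rfl) w hw <;> omega
  have hf_inj : Function.Injective f := fun a b h => by
    have := hf a
    have := hf b
    omega
  rw [hsplit, nkGrundy_insert_insert_of_leaves (G := doubleStar (m + 2) n k) (c := 0) (l := 1)
      (by rw [hmem]; omega) (by rw [hmem]; omega) (by rw [hmem]; omega) (by rw [hmem]; omega)
      (by omega) (by rw [doubleStar_adj]; omega)
      (hleaf _ (by simp)) (hleaf _ (by simp)) (hleaf _ (by simp)),
    nkGrundy_image (G := doubleStar m n k) hf_inj.injOn]
  exact fun a ha b hb => doubleStar_adj_add_two_left hf hk (mem_range.1 ha) (mem_range.1 hb)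

theorem nkGrundy_doubleStar_add_two_right (hn : 1 ≤ n) (hk : 1 ≤ k) :
    nkGrundy (doubleStar m (n + 2) k) (range (m + k + (n + 2) + 1)) =
      nkGrundy (doubleStar m n k) (range (m + k + n + 1)) := by
  have hsplit : range (m + k + (n + 2) + 1) =
      insert (m + k + n + 1) (insert (m + k + n + 2) (range (m + k + n + 1))) := by
    ext x
    simp only [mem_insert, mem_range]
    omega
  have hleaf : ∀ x ∈ ({m + k + 1, m + k + n + 1, m + k + n + 2} : Finset ℕ),
      ∀ w ∈ range (m + k + n + 1), (doubleStar m (n + 2) k).Adj x w ↔ w = m + k := by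
    simp only [mem_insert, mem_singleton, mem_range, doubleStar_adj]
    omega
  rw [hsplit, nkGrundy_insert_insert_of_leaves (G := doubleStar m (n + 2) k) (c := m + k)
      (l := m + k + 1) (by rw [mem_range]; omega) (by rw [mem_range]; omega)
      (by rw [mem_range]; omega) (by rw [mem_range]; omega) (by omega)
      (by rw [doubleStar_adj]; omega) (hleaf _ (by simp)) (hleaf _ (by simp)) (hleaf _ (by simp)),
    nkGrundy_congr_of_adj_iff (G := doubleStar m n k)]
  exact fun a ha b hb => doubleStar_adj_add_two_right (mem_range.1 ha) (mem_range.1 hb)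

end DoubleStar

theorem apply_eq_apply_ite_odd_of_add_two {α : Type*} {g : ℕ → α}
    (hg : ∀ x, 1 ≤ x → g (x + 2) = g x) {x : ℕ} (hx : 1 ≤ x) :
    g x = g (if Odd x then 1 else 2) := by
  induction x using Nat.strong_induction_on with
  | _ x ih =>
    rcases Nat.lt_or_ge x 3 with hlt | hge
    · interval_cases x <;> simp [Nat.odd_iff]
    · obtain ⟨y, rfl⟩ : ∃ y, x = y + 2 := ⟨x - 2, by omega⟩
      rw [hg y (by omega), ih y (by omega) (by omega)]
      simp [Nat.odd_add]

/-- With `a = 1` if `m` is odd and `2` if `m` is even, and `b = 1` if `n` is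
odd and `2` if `n` is even, we have
`𝒢(T_{m} ⊙_k T_{n}) = 𝒢(T_{a} ⊙_k T_{b})` for all positive `m, n, k`. -/
theorem nkGrundy_doubleStar_parity (m n k : ℕ) (hm : 1 ≤ m) (hn : 1 ≤ n)
    (hk : 1 ≤ k) :
    nkGrundy (doubleStar m n k) (Finset.range (m + k + n + 1)) =
      nkGrundy
        (doubleStar (if Odd m then 1 else 2) (if Odd n then 1 else 2) k)
        (Finset.range ((if Odd m then 1 else 2) + k + (if Odd n then 1 else 2) + 1)) := by
  have hleft := apply_eq_apply_ite_odd_of_add_two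
    (g := fun m => nkGrundy (doubleStar m n k) (range (m + k + n + 1)))
    (fun _ hm => nkGrundy_doubleStar_add_two_left hm hk) hm
  have hright := apply_eq_apply_ite_odd_of_add_two
    (g := fun n => nkGrundy (doubleStar (if Odd m then 1 else 2) n k)
      (range ((if Odd m then 1 else 2) + k + n + 1)))
    (fun _ hn => nkGrundy_doubleStar_add_two_right hn hk) hn
  exact hleft.trans hright
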